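/- arXiv:2202.09116 — 4 statements merged into one kernel-verified Lean document; each statement's English description precedes it below -/
import Mathlib

section
/- Let k > 0 and w > 1. Then for every x ≥ 0, (1/(2π)) ∫_ℝ x^(w+iλ) · k^(-(w-1+iλ)) / ((w+iλ)(w-1+iλ)) dλ = max(x - k, 0). -/
open Complex MeasureTheory

open Set

noncomputable def payoff (k : ℝ) : ℝ → ℂ := fun t => ((max (t - k) 0 : ℝ) : ℂ)

lemma payoff_integrand_eq (k : ℝ) (s : ℂ) {t : ℝ} (ht : t ∈ Ioi k) (hk : 0 < k) :
    (t : ℂ) ^ (s - 1) • payoff k t = (t : ℂ) ^ s - (k : ℂ) * (t : ℂ) ^ (s - 1) := by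
  have htk : k < t := ht
  have ht0 : (0:ℝ) < t := hk.trans htk
  have ht0' : (t : ℂ) ≠ 0 := by exact_mod_cast ht0.ne'
  have : payoff k t = (t : ℂ) - (k : ℂ) := by
    simp [payoff, max_eq_left (by linarith : (0:ℝ) ≤ t - k)]
  rw [this, smul_eq_mul, Complex.cpow_sub _ _ ht0', Complex.cpow_one]
  field_simp

lemma payoff_integrableOn (k : ℝ) (hk : 0 < k) {s : ℂ} (hs : s.re < -1) :
    IntegrableOn (fun t : ℝ => (t : ℂ) ^ (s - 1) • payoff k t) (Ioi 0) := by
  rw [show Ioi (0:ℝ) = Ioc 0 k ∪ Ioi k from (Ioc_union_Ioi_eq_Ioi hk.le).symm]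
  apply IntegrableOn.union
  · refine (integrableOn_zero).congr_fun (fun t ht => ?_) measurableSet_Ioc
    have : payoff k t = 0 := by simp [payoff, max_eq_right (by linarith [ht.2] : t - k ≤ 0)]
    simp [this]
  · have h1 : IntegrableOn (fun t : ℝ => (t : ℂ) ^ s) (Ioi k) :=
      integrableOn_Ioi_cpow_of_lt hs hk
    have h2 : IntegrableOn (fun t : ℝ => (k : ℂ) * (t : ℂ) ^ (s - 1)) (Ioi k) :=
      (integrableOn_Ioi_cpow_of_lt (by simp; linarith) hk).const_mul _
    refine IntegrableOn.congr_fun (h1.sub h2) (fun t ht => ?_) measurableSet_Ioi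
    simp only [Pi.sub_apply]
    exact (payoff_integrand_eq k s ht hk).symm

lemma mellin_payoff (k : ℝ) (hk : 0 < k) {s : ℂ} (hs : s.re < -1) :
    mellin (payoff k) s = (k : ℂ) ^ (s + 1) / (s * (s + 1)) := by
  have hs0 : s ≠ 0 := fun h => by rw [h] at hs; norm_num at hs
  have hs1 : s + 1 ≠ 0 := fun h => by
    have : s = -1 := by linear_combination h
    rw [this] at hs; norm_num at hs
  have hk0 : (k : ℂ) ≠ 0 := by exact_mod_cast hk.ne'
  rw [mellin, show Ioi (0:ℝ) = Ioc 0 k ∪ Ioi k from (Ioc_union_Ioi_eq_Ioi hk.le).symm]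
  rw [setIntegral_union (by simp) measurableSet_Ioi
      ((payoff_integrableOn k hk hs).mono_set Ioc_subset_Ioi_self)
      ((payoff_integrableOn k hk hs).mono_set (Ioi_subset_Ioi hk.le))]
  have e0 : (∫ t in Ioc 0 k, (t : ℂ) ^ (s - 1) • payoff k t) = 0 := by
    refine setIntegral_eq_zero_of_forall_eq_zero (fun t ht => ?_)
    have : payoff k t = 0 := by simp [payoff, max_eq_right (by linarith [ht.2] : t - k ≤ 0)]
    simp [this]
  have h1 : IntegrableOn (fun t : ℝ => (t : ℂ) ^ s) (Ioi k) :=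
    integrableOn_Ioi_cpow_of_lt hs hk
  have h2 : IntegrableOn (fun t : ℝ => (k : ℂ) * (t : ℂ) ^ (s - 1)) (Ioi k) :=
    (integrableOn_Ioi_cpow_of_lt (by simp; linarith) hk).const_mul _
  have e1 : (∫ t in Ioi k, (t : ℂ) ^ (s - 1) • payoff k t)
      = (∫ t in Ioi k, (t : ℂ) ^ s) - ∫ t in Ioi k, (k : ℂ) * (t : ℂ) ^ (s - 1) := by
    rw [← integral_sub h1 h2]
    exact setIntegral_congr_fun measurableSet_Ioi (fun t ht => payoff_integrand_eq k s ht hk)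
  rw [e0, e1, zero_add, integral_Ioi_cpow_of_lt hs hk, MeasureTheory.integral_const_mul,
    integral_Ioi_cpow_of_lt (by simp; linarith) hk]
  rw [show s - 1 + 1 = s by ring, show (k:ℂ)^(s+1) = (k:ℂ)^s * k from by
    rw [Complex.cpow_add _ _ hk0, Complex.cpow_one]]
  field_simp
  ring

lemma payoff_vertical (k w : ℝ) (hk : 0 < k) (hw : 1 < w) :
    Complex.VerticalIntegrable (mellin (payoff k)) (-w) := by
  have hre : ∀ y : ℝ, (((-w : ℝ) : ℂ) + y * I).re < -1 := by
    intro y; simp; linarith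
  have heq : ∀ y : ℝ, mellin (payoff k) (((-w : ℝ) : ℂ) + y * I)
      = (k : ℂ) ^ ((((-w : ℝ) : ℂ) + y * I) + 1) /
        (((((-w : ℝ) : ℂ) + y * I)) * ((((-w : ℝ) : ℂ) + y * I) + 1)) := fun y =>
    mellin_payoff k hk (hre y)
  rw [Complex.VerticalIntegrable]
  rw [show (fun y : ℝ => mellin (payoff k) (((-w : ℝ) : ℂ) + y * I))
      = fun y : ℝ => (k : ℂ) ^ ((((-w : ℝ) : ℂ) + y * I) + 1) /
        (((((-w : ℝ) : ℂ) + y * I)) * ((((-w : ℝ) : ℂ) + y * I) + 1)) from funext heq]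
  set m : ℝ := min (w * (w - 1)) 1 with hm
  have hm0 : 0 < m := lt_min (by nlinarith) one_pos
  have hden : ∀ y : ℝ, ((((-w : ℝ) : ℂ) + y * I)) * ((((-w : ℝ) : ℂ) + y * I) + 1) ≠ 0 := by
    intro y
    apply mul_ne_zero
    · intro h
      have := congrArg Complex.re h
      simp at this; linarith
    · intro h
      have := congrArg Complex.re h
      simp at this; linarith
  have hcont : Continuous (fun y : ℝ => (k : ℂ) ^ ((((-w : ℝ) : ℂ) + y * I) + 1) /
      (((((-w : ℝ) : ℂ) + y * I)) * ((((-w : ℝ) : ℂ) + y * I) + 1))) := by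
    apply Continuous.div
    · apply Continuous.const_cpow (by continuity)
      exact Or.inl (by exact_mod_cast hk.ne')
    · continuity
    · exact hden
  refine Integrable.mono' ((integrable_inv_one_add_sq).const_mul
    (2 * k ^ (1 - w) / m)) hcont.aestronglyMeasurable (Filter.Eventually.of_forall fun y => ?_)
  set s : ℂ := (((-w : ℝ) : ℂ) + y * I) with hsdef
  have hsre : s.re = -w := by simp [hsdef]
  have hsim : s.im = y := by simp [hsdef]
  have h1 : w ≤ ‖s‖ := by
    have := Complex.abs_re_le_norm s
    rw [hsre] at this; rw [abs_neg, abs_of_pos (by linarith : (0:ℝ) < w)] at this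
    exact this
  have h1' : |y| ≤ ‖s‖ := by
    have := Complex.abs_im_le_norm s
    rwa [hsim] at this
  have h2 : w - 1 ≤ ‖s + 1‖ := by
    have := Complex.abs_re_le_norm (s + 1)
    simp [hsre] at this
    rwa [show |(-w + 1 : ℝ)| = w - 1 from by rw [abs_of_nonpos (by linarith)]; ring] at this
  have h2' : |y| ≤ ‖s + 1‖ := by
    have := Complex.abs_im_le_norm (s + 1)
    simpa [hsim] using this
  have hprod : m * (1 + y ^ 2) / 2 ≤ ‖s‖ * ‖s + 1‖ := by
    have ha : w * (w - 1) ≤ ‖s‖ * ‖s + 1‖ :=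
      mul_le_mul h1 h2 (by linarith) (norm_nonneg s)
    have hb : y ^ 2 ≤ ‖s‖ * ‖s + 1‖ := by
      calc y ^ 2 = |y| * |y| := by rw [abs_mul_abs_self y]; ring
      _ ≤ _ := mul_le_mul h1' h2' (abs_nonneg y) (norm_nonneg s)
    have : m ≤ w * (w - 1) := min_le_left _ _
    have : m ≤ 1 := min_le_right _ _
    nlinarith [min_le_left (w * (w-1)) 1, min_le_right (w * (w-1)) 1]
  have hprodpos : 0 < m * (1 + y ^ 2) / 2 := by positivity
  have hnorm : ‖(k : ℂ) ^ (s + 1) / (s * (s + 1))‖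
      = k ^ (1 - w) / (‖s‖ * ‖s + 1‖) := by
    rw [norm_div, norm_mul,
      Complex.norm_cpow_eq_rpow_re_of_pos hk]
    congr 2
    simp only [Complex.add_re, hsre, Complex.one_re]
    ring
  rw [hnorm]
  calc k ^ (1 - w) / (‖s‖ * ‖s + 1‖)
      ≤ k ^ (1 - w) / (m * (1 + y ^ 2) / 2) := by
        apply div_le_div_of_nonneg_left (Real.rpow_nonneg hk.le _) hprodpos hprod
    _ = 2 * k ^ (1 - w) / m * (1 + y ^ 2)⁻¹ := by
        field_simp

/-- Fourier representation of the call payoff: for `k > 0` and `w > 1`,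
`(1/(2π)) ∫_ℝ x^(w+iλ) k^(-(w-1+iλ)) / ((w+iλ)(w-1+iλ)) dλ = (x - k)⁺` for all `x ≥ 0`. -/
theorem fourier_call_payoff (k w : ℝ) (hk : 0 < k) (hw : 1 < w) (x : ℝ) (hx : 0 ≤ x) :
    (1 / (2 * Real.pi) : ℂ) *
      ∫ lam : ℝ, (x : ℂ) ^ ((w : ℂ) + lam * Complex.I) *
        (k : ℂ) ^ (-(((w : ℂ) - 1) + lam * Complex.I)) /
        ((((w : ℂ) + lam * Complex.I)) * (((w : ℂ) - 1) + lam * Complex.I))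
      = ((max (x - k) 0 : ℝ) : ℂ) := by
  rcases eq_or_lt_of_le hx with hx0 | hx0
  · -- x = 0
    rw [← hx0]
    have hz : ∀ lam : ℝ, ((0:ℝ) : ℂ) ^ ((w : ℂ) + lam * Complex.I) *
        (k : ℂ) ^ (-(((w : ℂ) - 1) + lam * Complex.I)) /
        ((((w : ℂ) + lam * Complex.I)) * (((w : ℂ) - 1) + lam * Complex.I)) = 0 := by
      intro lam
      rw [Complex.ofReal_zero, Complex.zero_cpow (fun h => by
        have := congrArg Complex.re h; simp at this; linarith), zero_mul, zero_div]
    simp only [hz, integral_zero, mul_zero]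
    rw [max_eq_right (by linarith)]
    simp
  · have hconv : MellinConvergent (payoff k) ((-w : ℝ) : ℂ) :=
      payoff_integrableOn k hk (by simp; linarith)
    have hvert := payoff_vertical k w hk hw
    have hcont : ContinuousAt (payoff k) x := by
      apply Continuous.continuousAt
      exact Complex.continuous_ofReal.comp ((continuous_id.sub continuous_const).max
        continuous_const)
    have h := mellinInv_mellin_eq (-w) (payoff k) hx0 hconv hvert hcont
    rw [mellinInv] at h
    set G : ℝ → ℂ := fun y => (x : ℂ) ^ (-(((-w : ℝ) : ℂ) + y * Complex.I)) •
      mellin (payoff k) (((-w : ℝ) : ℂ) + y * Complex.I) with hG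
    have key : (∫ lam : ℝ, (x : ℂ) ^ ((w : ℂ) + lam * Complex.I) *
        (k : ℂ) ^ (-(((w : ℂ) - 1) + lam * Complex.I)) /
        ((((w : ℂ) + lam * Complex.I)) * (((w : ℂ) - 1) + lam * Complex.I)))
        = ∫ y : ℝ, G y := by
      rw [← integral_neg_eq_self G volume]
      apply integral_congr_ae
      filter_upwards with lam
      rw [hG]
      simp only
      rw [mellin_payoff k hk (by simp; linarith)]
      rw [smul_eq_mul]
      rw [show -((((-w : ℝ)) : ℂ) + ((-lam : ℝ) : ℂ) * Complex.I)
          = (w : ℂ) + lam * Complex.I from by push_cast; ring]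
      rw [show ((((-w : ℝ)) : ℂ) + ((-lam : ℝ) : ℂ) * Complex.I) + 1
          = -(((w : ℂ) - 1) + lam * Complex.I) from by push_cast; ring]
      rw [show ((((-w : ℝ)) : ℂ) + ((-lam : ℝ) : ℂ) * Complex.I) *
            (-(((w : ℂ) - 1) + lam * Complex.I))
          = (((w : ℂ) + lam * Complex.I)) * (((w : ℂ) - 1) + lam * Complex.I) from by
        push_cast; ring]
      rw [mul_div_assoc]
    rw [key]
    rw [show (1 / (2 * Real.pi) : ℂ) * ∫ y : ℝ, G y
        = (1 / (2 * Real.pi) : ℝ) • ∫ y : ℝ, G y from by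
      rw [Complex.real_smul]; push_cast; ring]
    exact h
end

section
/- Let Y_S and Y_T be real-valued random variables on a probability space such that E[exp(ε Y_S)] < ∞ and E[exp(-(1+ε) Y_T)] < ∞ for some ε > 0. Then, setting η = ε²/(2+3ε), one has E[exp(-(1-η) Y_S - (1+η)(Y_T - Y_S))] < ∞. -/
open MeasureTheory

/-- If `E[exp(ε Y_S)] < ∞` and `E[exp(-(1+ε)Y_T)] < ∞` for some `ε > 0`, then with
`η = ε²/(2+3ε)` one has `E[exp(-(1-η)Y_S - (1+η)(Y_T - Y_S))] < ∞`. -/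
theorem holder_exp_bound_two {Ω : Type*} [MeasurableSpace Ω] (P : Measure Ω)
    [IsProbabilityMeasure P] (YS YT : Ω → ℝ) (hYS : Measurable YS) (hYT : Measurable YT)
    (ε : ℝ) (hε : 0 < ε)
    (h1 : Integrable (fun ω => Real.exp (ε * YS ω)) P)
    (h2 : Integrable (fun ω => Real.exp (-(1 + ε) * YT ω)) P) :
    Integrable (fun ω =>
      Real.exp (-(1 - ε ^ 2 / (2 + 3 * ε)) * YS ω
        - (1 + ε ^ 2 / (2 + 3 * ε)) * (YT ω - YS ω))) P := by
  have hd : (0:ℝ) < 2 + 3 * ε := by linarith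
  set a : ℝ := 2 * ε / (2 + 3 * ε) with ha_def
  set b : ℝ := (2 + ε) / (2 + 3 * ε) with hb_def
  have ha : 0 ≤ a := by positivity
  have hb : 0 ≤ b := by positivity
  have hab : a + b = 1 := by rw [ha_def, hb_def, ← add_div]; field_simp; ring
  refine ((h1.const_mul a).add (h2.const_mul b)).mono' ?_ ?_
  · exact (((measurable_const.mul hYS).sub
      (measurable_const.mul (hYT.sub hYS))).exp).aestronglyMeasurable
  · refine Filter.Eventually.of_forall fun ω => ?_
    rw [Real.norm_eq_abs, abs_of_pos (Real.exp_pos _)]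
    have key : Real.exp (-(1 - ε ^ 2 / (2 + 3 * ε)) * YS ω
        - (1 + ε ^ 2 / (2 + 3 * ε)) * (YT ω - YS ω))
        = Real.exp (ε * YS ω) ^ a * Real.exp (-(1 + ε) * YT ω) ^ b := by
      rw [Real.rpow_def_of_pos (Real.exp_pos _), Real.rpow_def_of_pos (Real.exp_pos _),
        Real.log_exp, Real.log_exp, ← Real.exp_add]
      congr 1
      rw [ha_def, hb_def]
      field_simp
      ring
    rw [key]
    calc Real.exp (ε * YS ω) ^ a * Real.exp (-(1 + ε) * YT ω) ^ b
        ≤ a * Real.exp (ε * YS ω) + b * Real.exp (-(1 + ε) * YT ω) :=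
          Real.geom_mean_le_arith_mean2_weighted ha hb
            (le_of_lt (Real.exp_pos _)) (le_of_lt (Real.exp_pos _)) hab
      _ = _ := rfl
end

section
/- Let R: ℝ^m → ℝ^m be continuous, locally Lipschitz, quasi-monotone increasing with respect to ℝ₊^m, and convex in each component (R_i convex for each i). Fix Λ ∈ ℝ^m. For v ∈ ℝ and u ∈ ℝ^m, let Ψ(·, u, v) denote the solution to ∂_s Ψ(s,u,v) = R(Ψ(s,u,v)) + vΛ with Ψ(0,u,v) = u, defined on [0, t]. Then for (u₁, v₁), (u₂, v₂) with solutions defined on [0, t] and λ ∈ [0,1], setting (u_λ, v_λ) = λ(u₁,v₁) + (1-λ)(u₂,v₂), if Ψ(·, u_λ, v_λ) is also defined on [0, t], then Ψ(s, u_λ, v_λ) ≤ λ Ψ(s, u₁, v₁) + (1-λ) Ψ(s, u₂, v₂) componentwise for all s ∈ [0, t]. -/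
open MeasureTheory

/-- Convexity of solutions of the Riccati-type ODE `∂_s Ψ = R(Ψ) + vΛ` in the initial
condition and parameter: if `R` is continuous, locally Lipschitz, quasi-monotone
increasing and componentwise convex, then the solution from the convex combination of
initial data is dominated componentwise by the convex combination of the solutions. -/
theorem riccati_convexity {m : ℕ} (t : ℝ) (ht : 0 ≤ t)
    (R : (Fin m → ℝ) → (Fin m → ℝ)) (hRcont : Continuous R) (hRlip : LocallyLipschitz R)
    (hquasi : ∀ x y : Fin m → ℝ, (∀ j, x j ≤ y j) → ∀ i, x i = y i → R x i ≤ R y i)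
    (hconv : ∀ i, ConvexOn ℝ Set.univ (fun x => R x i))
    (Λ : Fin m → ℝ) (u₁ u₂ : Fin m → ℝ) (v₁ v₂ : ℝ) (lam : ℝ)
    (hlam0 : 0 ≤ lam) (hlam1 : lam ≤ 1)
    (ψ₁ ψ₂ ψl : ℝ → (Fin m → ℝ))
    (hψ₁0 : ψ₁ 0 = u₁) (hψ₂0 : ψ₂ 0 = u₂)
    (hψl0 : ψl 0 = lam • u₁ + (1 - lam) • u₂)
    (hψ₁ : ∀ s ∈ Set.Icc (0 : ℝ) t, HasDerivAt ψ₁ (R (ψ₁ s) + v₁ • Λ) s)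
    (hψ₂ : ∀ s ∈ Set.Icc (0 : ℝ) t, HasDerivAt ψ₂ (R (ψ₂ s) + v₂ • Λ) s)
    (hψl : ∀ s ∈ Set.Icc (0 : ℝ) t,
      HasDerivAt ψl (R (ψl s) + (lam * v₁ + (1 - lam) * v₂) • Λ) s) :
    ∀ s ∈ Set.Icc (0 : ℝ) t, ∀ i, ψl s i ≤ lam * ψ₁ s i + (1 - lam) * ψ₂ s i := by
  have hlam1' : (0:ℝ) ≤ 1 - lam := by linarith
  set f : ℝ → (Fin m → ℝ) := fun s => lam • ψ₁ s + (1 - lam) • ψ₂ s with hfdef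
  have hfi : ∀ s i, f s i = lam * ψ₁ s i + (1 - lam) * ψ₂ s i := by
    intro s i; simp [hfdef]
  -- derivative of f
  have hf' : ∀ s ∈ Set.Icc (0:ℝ) t, HasDerivAt f
      (lam • (R (ψ₁ s) + v₁ • Λ) + (1 - lam) • (R (ψ₂ s) + v₂ • Λ)) s := by
    intro s hs
    exact ((hψ₁ s hs).const_smul lam).add ((hψ₂ s hs).const_smul (1 - lam))
  -- continuity
  have hcψl : ContinuousOn ψl (Set.Icc 0 t) := fun s hs =>
    ((hψl s hs).continuousAt).continuousWithinAt
  have hcf : ContinuousOn f (Set.Icc 0 t) := fun s hs =>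
    ((hf' s hs).continuousAt).continuousWithinAt
  -- a bounded region containing both trajectories
  set A : Set (Fin m → ℝ) := ψl '' Set.Icc 0 t ∪ f '' Set.Icc 0 t with hAdef
  have hA : IsCompact A :=
    (isCompact_Icc.image_of_continuousOn hcψl).union (isCompact_Icc.image_of_continuousOn hcf)
  obtain ⟨ρ₀, hρ₀⟩ := hA.isBounded.subset_ball (0 : Fin m → ℝ)
  set ρ : ℝ := max ρ₀ 0 with hρdef
  have hρ0 : 0 ≤ ρ := le_max_right _ _
  have hρ : A ⊆ Metric.ball 0 ρ := hρ₀.trans (Metric.ball_subset_ball (le_max_left _ _))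
  -- componentwise Lipschitz constants from convexity
  have hlip : ∀ i : Fin m, ∃ K : NNReal,
      LipschitzOnWith K (fun x => R x i) (Metric.ball (0 : Fin m → ℝ) (ρ + 2)) := by
    intro i
    have hc : ConvexOn ℝ (Metric.ball (0 : Fin m → ℝ) (ρ + 3)) (fun x => R x i) :=
      (hconv i).subset (Set.subset_univ _) (convex_ball _ _)
    have hb : Bornology.IsBounded ((fun x => R x i) '' Metric.ball (0 : Fin m → ℝ) (ρ + 3)) := by
      refine (((isCompact_closedBall (0 : Fin m → ℝ) (ρ + 3)).image
        ((continuous_apply i).comp hRcont)).isBounded).subset ?_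
      exact Set.image_mono Metric.ball_subset_closedBall
    exact hc.exists_lipschitzOnWith_of_isBounded (by linarith) hb
  choose K hK using hlip
  set L : ℝ := ((Finset.univ.sup K : NNReal) : ℝ) with hLdef
  have hL0 : 0 ≤ L := (Finset.univ.sup K).coe_nonneg
  have hKL : ∀ i, (K i : ℝ) ≤ L := by
    intro i
    rw [hLdef]
    exact_mod_cast Finset.le_sup (f := K) (Finset.mem_univ i)
  -- the key estimate with an exponential correction
  have key : ∀ ε : ℝ, 0 < ε → ε * Real.exp ((L + 1) * t) ≤ 1 →
      ∀ s ∈ Set.Icc (0:ℝ) t, ∀ i, ψl s i < f s i + ε * Real.exp ((L + 1) * s) := by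
    intro ε hε hε1
    set c : ℝ → ℝ := fun s => ε * Real.exp ((L + 1) * s) with hcdef
    have hcpos : ∀ s, 0 < c s := fun s => mul_pos hε (Real.exp_pos _)
    have hcle1 : ∀ s ∈ Set.Icc (0:ℝ) t, c s ≤ 1 := by
      intro s hs
      have hexp : Real.exp ((L + 1) * s) ≤ Real.exp ((L + 1) * t) := by
        apply Real.exp_le_exp.2
        exact mul_le_mul_of_nonneg_left hs.2 (by linarith)
      calc c s = ε * Real.exp ((L + 1) * s) := rfl
        _ ≤ ε * Real.exp ((L + 1) * t) := mul_le_mul_of_nonneg_left hexp hε.le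
        _ ≤ 1 := hε1
    have hcderiv : ∀ s : ℝ, HasDerivAt c ((L + 1) * c s) s := by
      intro s
      have h1 : HasDerivAt (fun s : ℝ => (L + 1) * s) (L + 1) s := by
        simpa using (hasDerivAt_id s).const_mul (L + 1)
      have h2 := (Real.hasDerivAt_exp ((L + 1) * s)).comp s h1
      have h3 := h2.const_mul ε
      convert h3 using 1
      show (L + 1) * (ε * Real.exp ((L + 1) * s)) = _
      ring
      all_goals rfl
    by_contra hbad
    push_neg at hbad
    obtain ⟨s₁, hs₁, i₁, hi₁⟩ := hbad
    set B : Set ℝ := {s | s ∈ Set.Icc (0:ℝ) t ∧ ∃ i, f s i + c s ≤ ψl s i} with hBdef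
    have hBne : B.Nonempty := ⟨s₁, hs₁, i₁, hi₁⟩
    have hBsub : B ⊆ Set.Icc 0 t := fun s hs => hs.1
    have hccont : Continuous c := by
      apply Continuous.mul continuous_const
      exact Real.continuous_exp.comp (continuous_const.mul continuous_id)
    have hBclosed : IsClosed B := by
      have : B = ⋃ i : Fin m, {s | s ∈ Set.Icc (0:ℝ) t ∧ f s i + c s ≤ ψl s i} := by
        ext s
        simp only [hBdef, Set.mem_setOf_eq, Set.mem_iUnion]
        constructor
        · rintro ⟨h1, i, h2⟩; exact ⟨i, h1, h2⟩
        · rintro ⟨i, h1, h2⟩; exact ⟨h1, i, h2⟩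
      rw [this]
      apply isClosed_iUnion_of_finite
      intro i
      have hcont : ContinuousOn (fun s => ψl s i - (f s i + c s)) (Set.Icc 0 t) := by
        apply ContinuousOn.sub
        · exact (continuous_apply i).comp_continuousOn hcψl
        · exact ((continuous_apply i).comp_continuousOn hcf).add hccont.continuousOn
      have : {s | s ∈ Set.Icc (0:ℝ) t ∧ f s i + c s ≤ ψl s i}
          = Set.Icc (0:ℝ) t ∩ (fun s => ψl s i - (f s i + c s)) ⁻¹' Set.Ici 0 := by
        ext s; simp only [Set.mem_setOf_eq, Set.mem_inter_iff, Set.mem_preimage, Set.mem_Ici]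
        constructor
        · rintro ⟨h1, h2⟩; exact ⟨h1, by linarith⟩
        · rintro ⟨h1, h2⟩; exact ⟨h1, by linarith⟩
      rw [this]
      exact hcont.preimage_isClosed_of_isClosed isClosed_Icc isClosed_Ici
    have hBcompact : IsCompact B := isCompact_Icc.of_isClosed_subset hBclosed hBsub
    set s₀ : ℝ := sInf B with hs₀def
    have hs₀B : s₀ ∈ B := hBcompact.sInf_mem hBne
    have hs₀Icc : s₀ ∈ Set.Icc (0:ℝ) t := hs₀B.1
    -- 0 is not in B
    have hψl0' : ∀ j, ψl 0 j = f 0 j := by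
      intro j
      rw [hψl0, hfi, hψ₁0, hψ₂0]
      simp
    have h0B : (0:ℝ) ∉ B := by
      rintro ⟨-, i, hi⟩
      rw [hψl0' i] at hi
      have := hcpos 0
      linarith
    have hs₀pos : 0 < s₀ := by
      rcases lt_or_eq_of_le hs₀Icc.1 with h | h
      · exact h
      · exact absurd (h ▸ hs₀B) h0B
    -- strict inequality before s₀
    have hstrict : ∀ s ∈ Set.Icc (0:ℝ) t, s < s₀ → ∀ j, ψl s j < f s j + c s := by
      intro s hs hss j
      by_contra hcon
      push_neg at hcon
      have : s ∈ B := ⟨hs, j, hcon⟩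
      have hbdd : BddBelow B := ⟨0, fun x hx => (hBsub hx).1⟩
      have : s₀ ≤ s := csInf_le hbdd this
      linarith
    -- at s₀, componentwise ≤ by continuity from the left
    have hle : ∀ j, ψl s₀ j ≤ f s₀ j + c s₀ := by
      intro j
      have hIoo : Set.Ioo (0:ℝ) s₀ ∈ nhdsWithin s₀ (Set.Iio s₀) :=
        Ioo_mem_nhdsLT_of_mem ⟨hs₀pos, le_rfl⟩
      have htend : Filter.Tendsto (fun s => f s j + c s - ψl s j) (nhdsWithin s₀ (Set.Iio s₀))
          (nhds (f s₀ j + c s₀ - ψl s₀ j)) := by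
        have h1 : ContinuousAt (fun s => f s j + c s - ψl s j) s₀ := by
          have hfc : ContinuousAt (fun s => f s j) s₀ :=
            (continuous_apply j).continuousAt.comp (hf' s₀ hs₀Icc).continuousAt
          have hψc : ContinuousAt (fun s => ψl s j) s₀ :=
            (continuous_apply j).continuousAt.comp (hψl s₀ hs₀Icc).continuousAt
          exact (hfc.add hccont.continuousAt).sub hψc
        exact h1.tendsto.mono_left nhdsWithin_le_nhds
      have hev : ∀ᶠ s in nhdsWithin s₀ (Set.Iio s₀), 0 ≤ f s j + c s - ψl s j := by
        filter_upwards [hIoo] with s hs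
        have hsIcc : s ∈ Set.Icc (0:ℝ) t := ⟨hs.1.le, hs.2.le.trans hs₀Icc.2⟩
        have := hstrict s hsIcc hs.2 j
        linarith
      have := ge_of_tendsto htend hev
      linarith
    obtain ⟨i, hi⟩ := hs₀B.2
    have hieq : ψl s₀ i = f s₀ i + c s₀ := le_antisymm (hle i) hi
    -- derivative of h := f·i + c - ψl·i at s₀ is positive
    set d : ℝ := (lam • (R (ψ₁ s₀) + v₁ • Λ) + (1 - lam) • (R (ψ₂ s₀) + v₂ • Λ)) i
      + (L + 1) * c s₀ - (R (ψl s₀) + (lam * v₁ + (1 - lam) * v₂) • Λ) i with hddef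
    have hd : HasDerivAt (fun s => f s i + c s - ψl s i) d s₀ := by
      have h1 := (hasDerivAt_pi.1 (hf' s₀ hs₀Icc)) i
      have h2 := (hasDerivAt_pi.1 (hψl s₀ hs₀Icc)) i
      exact (h1.add (hcderiv s₀)).sub h2
    have hdpos : 0 < d := by
      -- convexity bound on f-side derivative
      have hcv : R (f s₀) i ≤ lam * R (ψ₁ s₀) i + (1 - lam) * R (ψ₂ s₀) i := by
        have := (hconv i).2 (Set.mem_univ (ψ₁ s₀)) (Set.mem_univ (ψ₂ s₀)) hlam0 hlam1'
          (by ring)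
        simpa [smul_eq_mul] using this
      -- quasimonotonicity
      have hgs : ∀ j, ψl s₀ j ≤ (fun j => f s₀ j + c s₀) j := fun j => hle j
      have hq : R (ψl s₀) i ≤ R (fun j => f s₀ j + c s₀) i :=
        hquasi _ _ hgs i hieq
      -- Lipschitz bound
      have hfA : f s₀ ∈ A := Set.mem_union_right _ ⟨s₀, hs₀Icc, rfl⟩
      have hfnorm : ‖f s₀‖ < ρ := by
        have := hρ hfA
        rwa [Metric.mem_ball, dist_zero_right] at this
      have hfball : f s₀ ∈ Metric.ball (0 : Fin m → ℝ) (ρ + 2) := by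
        rw [Metric.mem_ball, dist_zero_right]; linarith
      have hgball : (fun j => f s₀ j + c s₀) ∈ Metric.ball (0 : Fin m → ℝ) (ρ + 2) := by
        rw [Metric.mem_ball, dist_zero_right]
        have hone : ‖(fun _ : Fin m => (1:ℝ))‖ ≤ 1 := by
          apply pi_norm_le_iff_of_nonneg zero_le_one |>.2
          intro j; simp
        have heq : (fun j => f s₀ j + c s₀) = f s₀ + c s₀ • (fun _ : Fin m => (1:ℝ)) := by
          funext j; simp [mul_comm]
        rw [heq]
        calc ‖f s₀ + c s₀ • (fun _ : Fin m => (1:ℝ))‖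
            ≤ ‖f s₀‖ + ‖c s₀ • (fun _ : Fin m => (1:ℝ))‖ := norm_add_le _ _
          _ ≤ ‖f s₀‖ + c s₀ * 1 := by
              rw [norm_smul]
              have : |c s₀| = c s₀ := abs_of_pos (hcpos s₀)
              rw [Real.norm_eq_abs, this]
              gcongr
          _ < ρ + 2 := by
              have := hcle1 s₀ hs₀Icc
              linarith
      have hdistfg : dist ((fun j => f s₀ j + c s₀)) (f s₀) ≤ c s₀ := by
        rw [dist_eq_norm]
        have heq : (fun j => f s₀ j + c s₀) - f s₀ = c s₀ • (fun _ : Fin m => (1:ℝ)) := by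
          funext j; simp [mul_comm]
        rw [heq, norm_smul, Real.norm_eq_abs, abs_of_pos (hcpos s₀)]
        have hone : ‖(fun _ : Fin m => (1:ℝ))‖ ≤ 1 := by
          apply pi_norm_le_iff_of_nonneg zero_le_one |>.2
          intro j; simp
        calc c s₀ * ‖(fun _ : Fin m => (1:ℝ))‖ ≤ c s₀ * 1 :=
              mul_le_mul_of_nonneg_left hone (hcpos s₀).le
          _ = c s₀ := mul_one _
      have hlipbound : R (fun j => f s₀ j + c s₀) i ≤ R (f s₀) i + L * c s₀ := by
        have := (hK i).dist_le_mul _ hgball _ hfball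
        have habs : |R (fun j => f s₀ j + c s₀) i - R (f s₀) i| ≤ (K i : ℝ) * c s₀ := by
          rw [← Real.dist_eq]
          refine this.trans ?_
          exact mul_le_mul_of_nonneg_left hdistfg (K i).coe_nonneg
        have h1 := abs_le.1 habs |>.2
        have h2 : (K i : ℝ) * c s₀ ≤ L * c s₀ :=
          mul_le_mul_of_nonneg_right (hKL i) (hcpos s₀).le
        linarith
      -- combine
      have hfderiv_ge : (lam • (R (ψ₁ s₀) + v₁ • Λ) + (1 - lam) • (R (ψ₂ s₀) + v₂ • Λ)) i
          ≥ R (f s₀) i + (lam * v₁ + (1 - lam) * v₂) * Λ i := by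
        have hx : (lam • (R (ψ₁ s₀) + v₁ • Λ) + (1 - lam) • (R (ψ₂ s₀) + v₂ • Λ)) i
            = lam * (R (ψ₁ s₀) i + v₁ * Λ i) + (1 - lam) * (R (ψ₂ s₀) i + v₂ * Λ i) := by
          simp only [Pi.add_apply, Pi.smul_apply, smul_eq_mul]
        have hx2 : lam * (R (ψ₁ s₀) i + v₁ * Λ i) + (1 - lam) * (R (ψ₂ s₀) i + v₂ * Λ i)
            = (lam * R (ψ₁ s₀) i + (1 - lam) * R (ψ₂ s₀) i)
              + (lam * v₁ + (1 - lam) * v₂) * Λ i := by ring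
        rw [hx, hx2]
        linarith [hcv]
      have hψlderiv : (R (ψl s₀) + (lam * v₁ + (1 - lam) * v₂) • Λ) i
          = R (ψl s₀) i + (lam * v₁ + (1 - lam) * v₂) * Λ i := by
        simp only [Pi.add_apply, Pi.smul_apply, smul_eq_mul]
      rw [hddef, hψlderiv]
      have hchain : R (ψl s₀) i ≤ R (f s₀) i + L * c s₀ := hq.trans hlipbound
      have hring : (L + 1) * c s₀ = L * c s₀ + c s₀ := by ring
      have := hcpos s₀
      linarith [hfderiv_ge]
    -- contradiction: h ≥ 0 to the left of s₀, h s₀ = 0, h' s₀ > 0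
    have hslope := hasDerivAt_iff_tendsto_slope.1 hd
    have hevpos : ∀ᶠ s in nhdsWithin s₀ {s₀}ᶜ, 0 < slope (fun s => f s i + c s - ψl s i) s₀ s :=
      hslope.eventually (eventually_gt_nhds hdpos)
    have hIoo : Set.Ioo (0:ℝ) s₀ ∈ nhdsWithin s₀ (Set.Iio s₀) :=
      Ioo_mem_nhdsLT_of_mem ⟨hs₀pos, le_rfl⟩
    have hmono : nhdsWithin s₀ (Set.Iio s₀) ≤ nhdsWithin s₀ {s₀}ᶜ :=
      nhdsWithin_mono _ (fun s hs => ne_of_lt hs)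
    have hevpos' : ∀ᶠ s in nhdsWithin s₀ (Set.Iio s₀),
        0 < slope (fun s => f s i + c s - ψl s i) s₀ s := hevpos.filter_mono hmono
    have : ∃ s, s ∈ Set.Ioo (0:ℝ) s₀ ∧ 0 < slope (fun s => f s i + c s - ψl s i) s₀ s := by
      have : ∀ᶠ s in nhdsWithin s₀ (Set.Iio s₀),
          s ∈ Set.Ioo (0:ℝ) s₀ ∧ 0 < slope (fun s => f s i + c s - ψl s i) s₀ s := by
        filter_upwards [hIoo, hevpos'] with s h1 h2
        exact ⟨h1, h2⟩
      exact this.exists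
    obtain ⟨s, hsIoo, hslopepos⟩ := this
    have hsIcc : s ∈ Set.Icc (0:ℝ) t := ⟨hsIoo.1.le, hsIoo.2.le.trans hs₀Icc.2⟩
    have hpos : 0 < f s i + c s - ψl s i := by
      have := hstrict s hsIcc hsIoo.2 i
      linarith
    have hzero : f s₀ i + c s₀ - ψl s₀ i = 0 := by linarith [hieq]
    rw [slope_def_field] at hslopepos
    -- slope = (h s - h s₀) / (s - s₀), with h s₀ = 0 and s < s₀
    have hnum : (f s i + c s - ψl s i) - (f s₀ i + c s₀ - ψl s₀ i) > 0 := by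
      rw [hzero]; linarith
    have hden : s - s₀ < 0 := by linarith [hsIoo.2]
    have : ((f s i + c s - ψl s i) - (f s₀ i + c s₀ - ψl s₀ i)) / (s - s₀) < 0 :=
      div_neg_of_pos_of_neg hnum hden
    linarith
  -- conclude by letting ε → 0
  intro s hs i
  rw [← hfi]
  apply le_of_forall_pos_le_add
  intro δ hδ
  set ε : ℝ := min δ 1 * Real.exp (-((L + 1) * t)) with hεdef
  have hεpos : 0 < ε := mul_pos (lt_min hδ one_pos) (Real.exp_pos _)
  have hεexp : ε * Real.exp ((L + 1) * t) = min δ 1 := by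
    rw [hεdef, mul_assoc, ← Real.exp_add]
    simp
  have h1 := key ε hεpos (by rw [hεexp]; exact min_le_right _ _) s hs i
  have h2 : ε * Real.exp ((L + 1) * s) ≤ ε * Real.exp ((L + 1) * t) := by
    apply mul_le_mul_of_nonneg_left _ hεpos.le
    apply Real.exp_le_exp.2
    have : 0 ≤ L + 1 := by linarith
    nlinarith [hs.2]
  rw [hεexp] at h2
  have := min_le_left δ 1
  linarith
end

section
/- Let (Ω, F, P) be a probability space with filtration, B a positive adapted process (savings account) with B_S, B_T > 0, P_S(T) := E[B_S/B_T | F_S], and define the backward-looking rate R(S,T) = (B_T/B_S - 1)/(T-S) and the forward-looking rate F(S,T) via 1 + (T-S)F(S,T) = 1/P_S(T). Let P^T denote the T-forward measure with density dP^T/dP = 1/(B_T P_0(T)) where P_0(T) = E[1/B_T] (taking B_0 = 1). Then for any F_t-measurable event and t ≤ S, the caplet price inequality holds: (T-S) E[(B_t/B_T)(F(S,T) - K)^+ | F_t] ≤ (T-S) E[(B_t/B_T)(R(S,T) - K)^+ | F_t] almost surely, for every K > 0. -/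
open MeasureTheory

/-- Forward-looking caplets are cheaper than backward-looking caplets: with
`R(S,T) = (B_T/B_S - 1)/(T-S)` and `F(S,T)` defined via
`1 + (T-S)F(S,T) = 1/P_S(T)` where `P_S(T) = E[B_S/B_T | F_S]`, it holds a.s. that
`(T-S) E[(B_t/B_T)(F - K)⁺ | F_t] ≤ (T-S) E[(B_t/B_T)(R - K)⁺ | F_t]`. -/
theorem forward_le_backward_caplet {Ω : Type*} {m0 : MeasurableSpace Ω} (P : Measure Ω)
    [IsProbabilityMeasure P] (mt mS : MeasurableSpace Ω) (htS' : mt ≤ mS) (hSm : mS ≤ m0)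
    (t S T : ℝ) (ht : 0 ≤ t) (htS : t ≤ S) (hST : S < T) (K : ℝ) (hK : 0 < K)
    (Bt BS BT : Ω → ℝ)
    (hBtpos : ∀ ω, 0 < Bt ω) (hBSpos : ∀ ω, 0 < BS ω) (hBTpos : ∀ ω, 0 < BT ω)
    (hBtmeas : StronglyMeasurable[mt] Bt) (hBSmeas : StronglyMeasurable[mS] BS)
    (PST : Ω → ℝ) (hPSTpos : ∀ ω, 0 < PST ω)
    (hPST : PST =ᵐ[P] P[fun ω => BS ω / BT ω | mS])
    (Rr Ff : Ω → ℝ)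
    (hR : ∀ ω, Rr ω = (BT ω / BS ω - 1) / (T - S))
    (hF : ∀ ω, 1 + (T - S) * Ff ω = 1 / PST ω)
    (hint0 : Integrable (fun ω => BS ω / BT ω) P)
    (hintF : Integrable (fun ω => (Bt ω / BT ω) * max (Ff ω - K) 0) P)
    (hintR : Integrable (fun ω => (Bt ω / BT ω) * max (Rr ω - K) 0) P) :
    ∀ᵐ ω ∂P,
      (T - S) * (P[fun ω => (Bt ω / BT ω) * max (Ff ω - K) 0 | mt]) ω ≤
        (T - S) * (P[fun ω => (Bt ω / BT ω) * max (Rr ω - K) 0 | mt]) ω := by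
  classical
  letI : MeasurableSpace Ω := m0
  have hd : (0:ℝ) < T - S := sub_pos.mpr hST
  set c : ℝ := 1 + (T - S) * K with hc
  have hc1 : (0:ℝ) < c := by
    have : 0 < (T - S) * K := mul_pos hd hK
    rw [hc]; linarith
  set XF : Ω → ℝ := fun ω => (Bt ω / BT ω) * max (Ff ω - K) 0 with hXFdef
  set XR : Ω → ℝ := fun ω => (Bt ω / BT ω) * max (Rr ω - K) 0 with hXRdef
  set Q : Ω → ℝ := P[fun ω => BS ω / BT ω|mS] with hQdef
  set x0 : Ω → ℝ := fun ω => (Q ω)⁻¹ with hx0def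
  set a : Ω → ℝ := fun ω => if c < x0 ω then 1 else 0 with hadef
  set Z : Ω → ℝ := fun ω =>
    a ω * x0 ω * (Bt ω * ((BT ω)⁻¹ * (T - S)⁻¹)) -
      a ω * (Bt ω * ((BS ω)⁻¹ * (T - S)⁻¹)) with hZdef
  -- measurability
  have hQsm : StronglyMeasurable[mS] Q := stronglyMeasurable_condExp
  have hQm : Measurable[mS] Q := hQsm.measurable
  have hx0m : Measurable[mS] x0 := hQm.inv
  have ham : Measurable[mS] a :=
    Measurable.ite (measurableSet_lt measurable_const hx0m) measurable_const measurable_const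
  have hBtm : Measurable[mS] Bt := (hBtmeas.mono htS').measurable
  have hBSm : Measurable[mS] BS := hBSmeas.measurable
  have hQpos : ∀ᵐ ω ∂P, 0 < Q ω := by
    filter_upwards [hPST] with ω h
    rw [← h]; exact hPSTpos ω
  -- pointwise identities
  have hXFeq : ∀ ω, XF ω = Bt ω / BT ω * max ((PST ω)⁻¹ - c) 0 / (T - S) := by
    intro ω
    have h1 : Ff ω - K = ((PST ω)⁻¹ - c) / (T - S) := by
      rw [eq_div_iff hd.ne']
      have h2 := hF ω
      rw [one_div] at h2
      rw [hc]; ring_nf; ring_nf at h2; linarith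
    have h2 := max_div_div_right hd.le ((PST ω)⁻¹ - c) 0
    rw [zero_div] at h2
    rw [hXFdef]
    simp only []
    rw [h1, h2]; ring
  have hXReq : ∀ ω, XR ω = Bt ω / BT ω * max (BT ω / BS ω - c) 0 / (T - S) := by
    intro ω
    have h1 : Rr ω - K = (BT ω / BS ω - c) / (T - S) := by
      rw [eq_div_iff hd.ne', hR ω, hc]
      field_simp
      ring
    have h2 := max_div_div_right hd.le (BT ω / BS ω - c) 0
    rw [zero_div] at h2
    rw [hXRdef]
    simp only []
    rw [h1, h2]; ring
  -- the subgradient inequality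
  have hkey : ∀ u v : ℝ, max (u - c) 0 - max (v - c) 0 ≤ (if c < u then (1:ℝ) else 0) * (u - v) := by
    intro u v
    by_cases h : c < u
    · simp only [if_pos h, one_mul]
      have h1 : max (u - c) 0 = u - c := max_eq_left (by linarith)
      have h2 : v - c ≤ max (v - c) 0 := le_max_left _ _
      linarith
    · simp only [if_neg h, zero_mul]
      have h1 : max (u - c) 0 = 0 := max_eq_right (by push_neg at h; linarith)
      have h2 : (0:ℝ) ≤ max (v - c) 0 := le_max_right _ _
      linarith
  have hDZ : ∀ᵐ ω ∂P, XF ω - XR ω ≤ Z ω := by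
    filter_upwards [hPST] with ω hω
    have hBT := hBTpos ω
    have hBS := hBSpos ω
    have hBt := hBtpos ω
    have hx0eq : (PST ω)⁻¹ = x0 ω := by rw [hx0def]; simp only []; rw [hω]
    have hmax : max (x0 ω - c) 0 - max (BT ω / BS ω - c) 0 ≤ a ω * (x0 ω - BT ω / BS ω) := by
      have h := hkey (x0 ω) (BT ω / BS ω)
      rw [hadef]
      exact h
    have hpos : (0:ℝ) ≤ Bt ω / BT ω / (T - S) :=
      div_nonneg (div_nonneg (hBtpos ω).le (hBTpos ω).le) hd.le
    have hmul := mul_le_mul_of_nonneg_left hmax hpos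
    have e1 : XF ω - XR ω =
        Bt ω / BT ω / (T - S) * (max (x0 ω - c) 0 - max (BT ω / BS ω - c) 0) := by
      rw [hXFeq ω, hXReq ω, hx0eq]; ring
    have e2 : Z ω =
        Bt ω / BT ω / (T - S) * (a ω * (x0 ω - BT ω / BS ω)) := by
      rw [hZdef]
      simp only []
      field_simp
    rw [e1, e2]
    exact hmul
  -- truncation sets
  set E : ℕ → Set Ω := fun n => {ω | Bt ω ≤ (n:ℝ) ∧ (BS ω)⁻¹ ≤ (n:ℝ) ∧ x0 ω ≤ (n:ℝ)} with hEdef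
  have hEmeas : ∀ n, MeasurableSet[mS] (E n) := by
    intro n
    have : E n = {ω | Bt ω ≤ (n:ℝ)} ∩ ({ω | (BS ω)⁻¹ ≤ (n:ℝ)} ∩ {ω | x0 ω ≤ (n:ℝ)}) := rfl
    rw [this]
    exact (measurableSet_le hBtm measurable_const).inter
      ((measurableSet_le hBSm.inv measurable_const).inter
        (measurableSet_le hx0m measurable_const))
  have hEmono : Monotone E := by
    intro n m hnm ω hω
    obtain ⟨h1, h2, h3⟩ := hω
    have hcast : (n:ℝ) ≤ (m:ℝ) := Nat.cast_le.mpr hnm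
    exact ⟨h1.trans hcast, h2.trans hcast, h3.trans hcast⟩
  have hEunion : (⋃ n, E n) = Set.univ := by
    ext ω
    simp only [Set.mem_iUnion, Set.mem_univ, iff_true]
    obtain ⟨n, hn⟩ := exists_nat_ge (max (Bt ω) (max ((BS ω)⁻¹) (x0 ω)))
    exact ⟨n, (le_max_left _ _).trans hn,
      ((le_max_left _ _).trans (le_max_right _ _)).trans hn,
      ((le_max_right _ _).trans (le_max_right _ _)).trans hn⟩
  have hDint : Integrable (fun ω => XF ω - XR ω) P := hintF.sub hintR
  -- the key vanishing-integral computation on truncated sets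
  have hZint_eq : ∀ (A : Set Ω), MeasurableSet[mS] A → ∀ n : ℕ,
      Integrable ((A ∩ E n).indicator Z) P ∧ (∫ ω, (A ∩ E n).indicator Z ω ∂P) = 0 := by
    intro A hA n
    set s : Set Ω := A ∩ E n with hsdef
    have hsS : MeasurableSet[mS] s := hA.inter (hEmeas n)
    set b : Ω → ℝ := s.indicator (fun ω => a ω * x0 ω * (Bt ω * ((BS ω)⁻¹ * (T - S)⁻¹))) with hbdef
    set g : Ω → ℝ := s.indicator (fun ω => a ω * (Bt ω * ((BS ω)⁻¹ * (T - S)⁻¹))) with hgdef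
    have hsplit : ∀ ω, s.indicator Z ω = b ω * (BS ω / BT ω) - g ω := by
      intro ω
      by_cases hω : ω ∈ s
      · rw [hbdef, hgdef]
        rw [Set.indicator_of_mem hω, Set.indicator_of_mem hω, Set.indicator_of_mem hω]
        have hBS := (hBSpos ω).ne'
        have hBT := (hBTpos ω).ne'
        rw [hZdef]
        simp only []
        field_simp
      · rw [hbdef, hgdef]
        rw [Set.indicator_of_notMem hω, Set.indicator_of_notMem hω,
          Set.indicator_of_notMem hω]
        ring
    have hbmS : StronglyMeasurable[mS] b :=
      (Measurable.indicator ((ham.mul hx0m).mul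
        (hBtm.mul (hBSm.inv.mul measurable_const))) hsS).stronglyMeasurable
    have hgmS : StronglyMeasurable[mS] g :=
      (Measurable.indicator (ham.mul
        (hBtm.mul (hBSm.inv.mul measurable_const))) hsS).stronglyMeasurable
    -- bounds
    have hbbd : ∀ ω, ‖b ω‖ ≤ (n:ℝ)^3 * (T - S)⁻¹ := by
      intro ω
      by_cases hω : ω ∈ s
      · obtain ⟨-, h1, h2, h3⟩ : ω ∈ A ∧ Bt ω ≤ (n:ℝ) ∧ (BS ω)⁻¹ ≤ (n:ℝ) ∧ x0 ω ≤ (n:ℝ) :=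
          ⟨hω.1, hω.2⟩
        rw [hbdef, Set.indicator_of_mem hω, Real.norm_eq_abs]
        have hBt := hBtpos ω
        have hBS : (0:ℝ) < (BS ω)⁻¹ := inv_pos.mpr (hBSpos ω)
        have hdi : (0:ℝ) < (T - S)⁻¹ := inv_pos.mpr hd
        have hn0 : (0:ℝ) < (n:ℝ) := lt_of_lt_of_le hBt h1
        rw [hadef]
        simp only []
        by_cases hcx : c < x0 ω
        · rw [if_pos hcx, one_mul]
          have hx0pos : 0 < x0 ω := lt_trans hc1 hcx
          rw [abs_of_nonneg (mul_nonneg hx0pos.le (mul_nonneg hBt.le (mul_nonneg hBS.le hdi.le)))]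
          have t1 : x0 ω * Bt ω ≤ (n:ℝ) * (n:ℝ) :=
            mul_le_mul h3 h1 hBt.le hn0.le
          have t2 : x0 ω * Bt ω * (BS ω)⁻¹ ≤ (n:ℝ) * (n:ℝ) * (n:ℝ) :=
            mul_le_mul t1 h2 hBS.le (by positivity)
          have t3 := mul_le_mul_of_nonneg_right t2 hdi.le
          calc x0 ω * (Bt ω * ((BS ω)⁻¹ * (T - S)⁻¹))
              = x0 ω * Bt ω * (BS ω)⁻¹ * (T - S)⁻¹ := by ring
            _ ≤ (n:ℝ) * (n:ℝ) * (n:ℝ) * (T - S)⁻¹ := t3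
            _ = (n:ℝ)^3 * (T - S)⁻¹ := by ring
        · rw [if_neg hcx]
          simp only [zero_mul, abs_zero]
          exact mul_nonneg (pow_nonneg (Nat.cast_nonneg n) 3) (inv_pos.mpr hd).le
      · rw [hbdef, Set.indicator_of_notMem hω, norm_zero]
        exact mul_nonneg (pow_nonneg (Nat.cast_nonneg n) 3) (inv_pos.mpr hd).le
    have hgbd : ∀ ω, ‖g ω‖ ≤ (n:ℝ)^2 * (T - S)⁻¹ := by
      intro ω
      by_cases hω : ω ∈ s
      · obtain ⟨-, h1, h2, -⟩ : ω ∈ A ∧ Bt ω ≤ (n:ℝ) ∧ (BS ω)⁻¹ ≤ (n:ℝ) ∧ x0 ω ≤ (n:ℝ) :=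
          ⟨hω.1, hω.2⟩
        rw [hgdef, Set.indicator_of_mem hω, Real.norm_eq_abs]
        have hBt := hBtpos ω
        have hBS : (0:ℝ) < (BS ω)⁻¹ := inv_pos.mpr (hBSpos ω)
        have hdi : (0:ℝ) < (T - S)⁻¹ := inv_pos.mpr hd
        have hn0 : (0:ℝ) < (n:ℝ) := lt_of_lt_of_le hBt h1
        rw [hadef]
        simp only []
        by_cases hcx : c < x0 ω
        · rw [if_pos hcx, one_mul]
          rw [abs_of_nonneg (mul_nonneg hBt.le (mul_nonneg hBS.le hdi.le))]
          have t1 : Bt ω * (BS ω)⁻¹ ≤ (n:ℝ) * (n:ℝ) :=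
            mul_le_mul h1 h2 hBS.le hn0.le
          have t3 := mul_le_mul_of_nonneg_right t1 hdi.le
          calc Bt ω * ((BS ω)⁻¹ * (T - S)⁻¹)
              = Bt ω * (BS ω)⁻¹ * (T - S)⁻¹ := by ring
            _ ≤ (n:ℝ) * (n:ℝ) * (T - S)⁻¹ := t3
            _ = (n:ℝ)^2 * (T - S)⁻¹ := by ring
        · rw [if_neg hcx]
          simp only [zero_mul, abs_zero]
          exact mul_nonneg (pow_nonneg (Nat.cast_nonneg n) 2) (inv_pos.mpr hd).le
      · rw [hgdef, Set.indicator_of_notMem hω, norm_zero]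
        exact mul_nonneg (pow_nonneg (Nat.cast_nonneg n) 2) (inv_pos.mpr hd).le
    -- integrability
    have hbh' : Integrable (fun ω => b ω * (BS ω / BT ω)) P :=
      hint0.bdd_mul ((hbmS.mono hSm).aestronglyMeasurable) (Filter.Eventually.of_forall hbbd)
    have hgint : Integrable g P :=
      Integrable.mono' (integrable_const ((n:ℝ)^2 * (T - S)⁻¹))
        ((hgmS.mono hSm).aestronglyMeasurable) (Filter.Eventually.of_forall hgbd)
    have hbQ : Integrable (fun ω => b ω * Q ω) P := by
      have : Integrable Q P := integrable_condExp
      exact this.bdd_mul ((hbmS.mono hSm).aestronglyMeasurable) (Filter.Eventually.of_forall hbbd)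
    constructor
    · exact (hbh'.sub hgint).congr (Filter.Eventually.of_forall fun ω => (hsplit ω).symm)
    · have hmul : P[fun ω => b ω * (BS ω / BT ω)|mS] =ᵐ[P] fun ω => b ω * Q ω := by
        have := condExp_mul_of_stronglyMeasurable_left (μ := P) hbmS hbh' hint0
        exact this
      have hzero : (fun ω => b ω * Q ω - g ω) =ᵐ[P] 0 := by
        filter_upwards [hQpos] with ω hQω
        by_cases hω : ω ∈ s
        · rw [hbdef, hgdef]
          simp only [Set.indicator_of_mem hω, Pi.zero_apply]
          have hx : x0 ω * Q ω = 1 := by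
            rw [hx0def]; simp only []; exact inv_mul_cancel₀ hQω.ne'
          calc a ω * x0 ω * (Bt ω * ((BS ω)⁻¹ * (T - S)⁻¹)) * Q ω -
                a ω * (Bt ω * ((BS ω)⁻¹ * (T - S)⁻¹))
              = a ω * (Bt ω * ((BS ω)⁻¹ * (T - S)⁻¹)) * (x0 ω * Q ω - 1) := by ring
            _ = 0 := by rw [hx]; ring
        · rw [hbdef, hgdef]
          simp [Set.indicator_of_notMem hω]
      calc (∫ ω, s.indicator Z ω ∂P)
          = ∫ ω, (b ω * (BS ω / BT ω) - g ω) ∂P :=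
            integral_congr_ae (Filter.Eventually.of_forall hsplit)
        _ = (∫ ω, b ω * (BS ω / BT ω) ∂P) - ∫ ω, g ω ∂P := integral_sub hbh' hgint
        _ = (∫ ω, (P[fun ω => b ω * (BS ω / BT ω)|mS]) ω ∂P) - ∫ ω, g ω ∂P := by
            rw [integral_condExp hSm]
        _ = (∫ ω, b ω * Q ω ∂P) - ∫ ω, g ω ∂P := by
            rw [integral_congr_ae hmul]
        _ = ∫ ω, (b ω * Q ω - g ω) ∂P := (integral_sub hbQ hgint).symm
        _ = 0 := by rw [integral_congr_ae hzero]; simp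
  -- set integrals of D over mS-sets are nonpositive
  have hAint : ∀ A : Set Ω, MeasurableSet[mS] A → (∫ ω in A, (XF ω - XR ω) ∂P) ≤ 0 := by
    intro A hA
    have hsm0 : ∀ n : ℕ, MeasurableSet[m0] (A ∩ E n) := fun n => hSm _ (hA.inter (hEmeas n))
    have hmono' : Monotone (fun n => A ∩ E n) := fun n m h =>
      Set.inter_subset_inter_right A (hEmono h)
    have hunion : (⋃ n, A ∩ E n) = A := by
      rw [← Set.inter_iUnion, hEunion, Set.inter_univ]
    have htend := tendsto_setIntegral_of_monotone (μ := P) (f := fun ω => XF ω - XR ω)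
      hsm0 hmono' (by rw [hunion]; exact hDint.integrableOn)
    rw [hunion] at htend
    refine le_of_tendsto htend (Filter.Eventually.of_forall fun n => ?_)
    obtain ⟨hZind_int, hZind_zero⟩ := hZint_eq A hA n
    have hZon : IntegrableOn Z (A ∩ E n) P := (integrable_indicator_iff (hsm0 n)).mp hZind_int
    calc (∫ ω in A ∩ E n, (XF ω - XR ω) ∂P)
        ≤ ∫ ω in A ∩ E n, Z ω ∂P := setIntegral_mono_ae hDint.integrableOn hZon hDZ
      _ = ∫ ω, (A ∩ E n).indicator Z ω ∂P := by rw [integral_indicator (hsm0 n)]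
      _ = 0 := hZind_zero
  -- conditional expectation of D given mS is nonpositive
  set Dbar : Ω → ℝ := P[fun ω => XF ω - XR ω|mS] with hDbardef
  have hDbarm : StronglyMeasurable[mS] Dbar := stronglyMeasurable_condExp
  have hDbarint : Integrable Dbar P := integrable_condExp
  have hDbar_le : Dbar ≤ᵐ[P] 0 := by
    have hneg : 0 ≤ᵐ[P.trim hSm] fun ω => -Dbar ω := by
      apply ae_nonneg_of_forall_setIntegral_nonneg
      · exact (hDbarint.trim hSm hDbarm).neg
      · intro s hs _
        rw [← setIntegral_trim (f := fun ω => -Dbar ω) hSm hDbarm.neg hs]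
        have h1 : (∫ ω in s, Dbar ω ∂P) = ∫ ω in s, (XF ω - XR ω) ∂P :=
          setIntegral_condExp hSm hDint hs
        have h2 := hAint s hs
        rw [integral_neg, h1]
        linarith
    have := ae_le_of_ae_le_trim (hm := hSm) hneg
    filter_upwards [this] with ω hω
    have : (0:ℝ) ≤ -Dbar ω := hω
    simpa using this
  -- tower property and conclusion
  have hsub : P[fun ω => XF ω - XR ω|mt] =ᵐ[P] P[XF|mt] - P[XR|mt] := condExp_sub hintF hintR mt
  have htower : P[Dbar|mt] =ᵐ[P] P[fun ω => XF ω - XR ω|mt] :=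
    condExp_condExp_of_le htS' hSm
  have hmono2 : P[Dbar|mt] ≤ᵐ[P] P[(0 : Ω → ℝ)|mt] :=
    condExp_mono hDbarint (integrable_zero _ _ _) hDbar_le
  rw [condExp_zero] at hmono2
  filter_upwards [hsub, htower, hmono2] with ω h1 h2 h3
  have h4 : (P[XF|mt]) ω - (P[XR|mt]) ω ≤ 0 := by
    have := h3
    rw [h2, h1] at this
    simpa using this
  have h5 : (P[XF|mt]) ω ≤ (P[XR|mt]) ω := by linarith
  exact mul_le_mul_of_nonneg_left h5 hd.le
end
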